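/- Let A be a unital separable C*-algebra, H a separable Hilbert space, G a group acting on A by τ : G → Aut(A), and let φ : A → B(H) be a G-invariant UCP map with Paschke dilation (X, σ, e). Then there exists a representation W_φ of G by Hilbert B(H)-module isomorphisms of X (unitary adjointable operators) such that W_φ(g)e = e and W_φ(g) σ(a) W_φ(g)* = σ(τ_g(a)) for all g ∈ G and a ∈ A. -/

import Mathlib

/-!
Since `φ` is `G`-invariant and `τ_g` is a `*`-automorphism, the generators `σ(a)(e·b)` and
`σ(τ_g a)(e·b)` of `X` have the same Gram matrix `⟨σ(a)(e·b), σ(a')(e·b')⟩ = b'* φ(a'* a) b`.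
So `σ(a)(e·b) ↦ σ(τ_g a)(e·b)` is a well-defined inner-product-preserving map on the dense span
of the generators, and by the Cauchy–Schwarz inequality for Hilbert modules it extends to an
inner-product-preserving operator `W g` on `X`. Two bounded operators agreeing on the generators
are equal, which gives `W (g₁ g₂) = W g₁ W g₂`, `W 1 = 1`, `W g e = e` and
`W g σ(a) = σ(τ_g a) W g`. Finally, a surjective map preserving the inner product commutes with the
right action: `W(x·b) - (W x)·b` is orthogonal to everything.
-/

open scoped ComplexOrder ComplexInnerProductSpace

noncomputable section

/-- A map `φ : A → B(H)` is completely positive. -/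
def IsCPMap (A : Type) [Ring A] [StarRing A] [Algebra ℂ A]
    (H : Type) [NormedAddCommGroup H] [InnerProductSpace ℂ H] [CompleteSpace H]
    (φ : A → (H →L[ℂ] H)) : Prop :=
  (∀ x y, φ (x + y) = φ x + φ y) ∧
  (∀ (c : ℂ) (x : A), φ (c • x) = c • φ x) ∧
  ∀ (n : ℕ) (a : Fin n → A) (h : Fin n → H),
    0 ≤ ∑ i, ∑ j, ⟪h i, (φ (star (a i) * a j)) (h j)⟫

/-- A unital completely positive map. -/
def IsUCPMap (A : Type) [Ring A] [StarRing A] [Algebra ℂ A]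
    (H : Type) [NormedAddCommGroup H] [InnerProductSpace ℂ H] [CompleteSpace H]
    (φ : A → (H →L[ℂ] H)) : Prop :=
  IsCPMap A H φ ∧ φ 1 = 1

/-- The data and axioms of a Hilbert `B`-module structure on `X`: a right `B`-module
with a `B`-valued inner product satisfying Paschke's axioms, complete in the norm
`‖x‖ = ‖⟨x,x⟩‖^{1/2}` (the norm of `X` agrees with this norm). -/
structure HilbertModuleStruct (B : Type) [CStarAlgebra B]
    (X : Type) [NormedAddCommGroup X] [Module ℂ X] [CompleteSpace X] : Type where
  /-- the `B`-valued inner product -/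
  inner : X → X → B
  /-- the right action of `B` on `X` -/
  smulR : X → B → X
  inner_add_left : ∀ x y z, inner (x + y) z = inner x z + inner y z
  inner_smulC_left : ∀ (c : ℂ) (x y : X), inner (c • x) y = c • inner x y
  inner_star : ∀ x y, inner x y = star (inner y x)
  inner_smulR_left : ∀ x y b, inner (smulR x b) y = inner x y * b
  /-- `⟨x, x⟩ ≥ 0`, expressed by `⟨x, x⟩` being of the form `b* b` -/
  inner_self_pos : ∀ x, ∃ b : B, inner x x = star b * b
  inner_self_eq_zero : ∀ x, inner x x = 0 → x = 0
  smulR_add : ∀ x b₁ b₂, smulR x (b₁ + b₂) = smulR x b₁ + smulR x b₂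
  add_smulR : ∀ x y b, smulR (x + y) b = smulR x b + smulR y b
  smulR_mul : ∀ x b₁ b₂, smulR (smulR x b₁) b₂ = smulR x (b₁ * b₂)
  smulR_one : ∀ x, smulR x 1 = x
  smulC_smulR : ∀ (c : ℂ) x b, smulR (c • x) b = c • smulR x b
  smulR_smulC : ∀ (c : ℂ) x b, smulR x (c • b) = c • smulR x b
  norm_eq : ∀ x, ‖x‖ = Real.sqrt ‖inner x x‖

/-- `(X, σ, e)` (with Hilbert module structure `M` on `X`) is a Paschke dilation of the
completely positive map `φ : A → B`:  `σ` is a unital `*`-representation of `A` by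
adjointable operators on `X`, `φ(a) = ⟨σ(a) e, e⟩`, and `{σ(a)(e·b)}` is total in `X`. -/
def IsPaschkeDilation {A : Type} [Ring A] [StarRing A] [Algebra ℂ A]
    {B : Type} [CStarAlgebra B]
    {X : Type} [NormedAddCommGroup X] [Module ℂ X] [CompleteSpace X]
    (M : HilbertModuleStruct B X) (φ : A → B) (σ : A → X → X) (e : X) : Prop :=
  (∀ a : A, Continuous (σ a)) ∧
  (∀ (a : A) (x y : X), σ a (x + y) = σ a x + σ a y) ∧
  (∀ (a : A) (c : ℂ) (x : X), σ a (c • x) = c • σ a x) ∧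
  (∀ (a : A) (x : X) (b : B), σ a (M.smulR x b) = M.smulR (σ a x) b) ∧
  (∀ (a₁ a₂ : A) (x : X), σ (a₁ + a₂) x = σ a₁ x + σ a₂ x) ∧
  (∀ (c : ℂ) (a : A) (x : X), σ (c • a) x = c • σ a x) ∧
  (∀ (a₁ a₂ : A) (x : X), σ (a₁ * a₂) x = σ a₁ (σ a₂ x)) ∧
  (∀ x : X, σ 1 x = x) ∧
  (∀ (a : A) (x y : X), M.inner (σ a x) y = M.inner x (σ (star a) y)) ∧
  (∀ a : A, φ a = M.inner (σ a e) e) ∧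
  Dense (↑(Submodule.span ℂ {x : X | ∃ (a : A) (b : B), σ a (M.smulR e b) = x}) : Set X)

namespace HilbertModuleStruct

variable {B : Type} [CStarAlgebra B] {X : Type} [NormedAddCommGroup X] [Module ℂ X]
  [CompleteSpace X] (M : HilbertModuleStruct B X)

lemma inner_add_right (x y z : X) : M.inner x (y + z) = M.inner x y + M.inner x z := by
  rw [M.inner_star, M.inner_add_left, star_add, ← M.inner_star, ← M.inner_star]

lemma inner_smulC_right (c : ℂ) (x y : X) : M.inner x (c • y) = star c • M.inner x y := by
  rw [M.inner_star, M.inner_smulC_left, star_smul, ← M.inner_star]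

lemma inner_smulR_right (x y : X) (b : B) : M.inner x (M.smulR y b) = star b * M.inner x y := by
  rw [M.inner_star, M.inner_smulR_left, star_mul, ← M.inner_star]

def innerₛₗ : X →ₗ[ℂ] X →ₗ⋆[ℂ] B :=
  LinearMap.mk₂'ₛₗ (RingHom.id ℂ) (starRingEnd ℂ) M.inner M.inner_add_left M.inner_smulC_left
    M.inner_add_right M.inner_smulC_right

@[simp] lemma innerₛₗ_apply (x y : X) : M.innerₛₗ x y = M.inner x y := rfl

lemma inner_sub_left (x y z : X) : M.inner (x - y) z = M.inner x z - M.inner y z := by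
  simp only [← innerₛₗ_apply, map_sub, LinearMap.sub_apply]

lemma inner_sub_right (x y z : X) : M.inner x (y - z) = M.inner x y - M.inner x z := by
  simp only [← innerₛₗ_apply, map_sub]

lemma norm_sq_eq (x : X) : ‖x‖ ^ 2 = ‖M.inner x x‖ := by
  rw [M.norm_eq, Real.sq_sqrt (norm_nonneg _)]

include M in
lemma norm_smulC (c : ℂ) (x : X) : ‖c • x‖ = ‖c‖ * ‖x‖ := by
  rw [M.norm_eq, M.inner_smulC_left, inner_smulC_right, smul_smul, norm_smul, RCLike.star_def,
    RCLike.mul_conj, norm_pow, RCLike.norm_ofReal, abs_norm, Real.sqrt_mul (sq_nonneg _),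
    Real.sqrt_sq (norm_nonneg _), ← M.norm_eq]

-- Not an instance: `M` cannot be inferred from `X`.
abbrev normedSpace : NormedSpace ℂ X where
  norm_smul_le c x := (M.norm_smulC c x).le

lemma inner_linearCombination_eq {ι : Type*} {f f' : ι → X}
    (h : ∀ i j, M.inner (f' i) (f' j) = M.inner (f i) (f j)) (u v : ι →₀ ℂ) :
    M.inner (Finsupp.linearCombination ℂ f' u) (Finsupp.linearCombination ℂ f' v) =
      M.inner (Finsupp.linearCombination ℂ f u) (Finsupp.linearCombination ℂ f v) := by
  simp only [Finsupp.linearCombination_apply, Finsupp.sum, ← innerₛₗ_apply]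
  simp only [map_sum, LinearMap.sum_apply, map_smul, map_smulₛₗ, LinearMap.smul_apply,
    innerₛₗ_apply, h]

lemma map_smulR_of_surjective {W : X → X} (hW : Function.Surjective W)
    (hinner : ∀ x y, M.inner (W x) (W y) = M.inner x y) (x : X) (b : B) :
    W (M.smulR x b) = M.smulR (W x) b := by
  have horth : ∀ y, M.inner (W (M.smulR x b) - M.smulR (W x) b) (W y) = 0 := fun y => by
    rw [M.inner_sub_left, hinner, M.inner_smulR_left, M.inner_smulR_left, hinner, sub_self]
  obtain ⟨y, hy⟩ := hW (W (M.smulR x b) - M.smulR (W x) b)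
  exact sub_eq_zero.mp (M.inner_self_eq_zero _ (hy ▸ horth y))

variable [PartialOrder B] [StarOrderedRing B]

lemma inner_self_nonneg (x : X) : 0 ≤ M.inner x x := by
  obtain ⟨b, hb⟩ := M.inner_self_pos x
  exact hb ▸ star_mul_self_nonneg b

lemma inner_mul_inner_swap_le (x y : X) :
    M.inner x y * M.inner y x ≤ ‖x‖ ^ 2 • M.inner y y := by
  rcases eq_or_ne x 0 with rfl | hx
  · simp [← innerₛₗ_apply]
  set s := M.inner y x
  set t := ‖x‖ ^ 2
  have hxy : M.inner x y = star s := M.inner_star x y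
  have hconj : star s * M.inner x x * s ≤ t • (star s * s) := by
    rw [show t = ‖M.inner x x‖ from M.norm_sq_eq x]
    exact CStarAlgebra.star_left_conjugate_le_norm_smul (M.inner_star x x).symm
  have hexpand : M.inner (M.smulR x s - (t : ℂ) • y) (M.smulR x s - (t : ℂ) • y)
      = star s * M.inner x x * s - t • (star s * s) - t • (star s * s) + t • t • M.inner y y := by
    simp only [inner_sub_left, inner_sub_right, inner_smulR_left, inner_smulR_right,
      inner_smulC_left, inner_smulC_right, hxy, Complex.star_def, Complex.conj_ofReal]
    simp only [Complex.coe_smul, mul_sub, mul_smul_comm, smul_sub, mul_assoc]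
    abel
  have hpos : 0 ≤ t • (t • M.inner y y - star s * s) :=
    calc 0 ≤ _ := M.inner_self_nonneg (M.smulR x s - (t : ℂ) • y)
      _ = _ := hexpand
      _ ≤ t • (star s * s) - t • (star s * s) - t • (star s * s) + t • t • M.inner y y := by
        gcongr
      _ = _ := by rw [smul_sub]; abel
  have ht : 0 < t := by positivity
  rw [hxy, ← sub_nonneg]
  simpa [smul_smul, inv_mul_cancel₀ ht.ne'] using smul_nonneg (inv_nonneg.mpr ht.le) hpos

lemma norm_inner_le (x y : X) : ‖M.inner x y‖ ≤ ‖x‖ * ‖y‖ := by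
  have hsq : ‖M.inner x y‖ ^ 2 ≤ (‖x‖ * ‖y‖) ^ 2 :=
    calc ‖M.inner x y‖ ^ 2 = ‖M.inner x y * M.inner y x‖ := by
          rw [M.inner_star y x, CStarRing.norm_self_mul_star, sq]
      _ ≤ ‖‖x‖ ^ 2 • M.inner y y‖ := by
          refine CStarAlgebra.norm_le_norm_of_nonneg_of_le ?_ (M.inner_mul_inner_swap_le x y)
          rw [M.inner_star y x]
          exact mul_star_self_nonneg _
      _ = (‖x‖ * ‖y‖) ^ 2 := by rw [norm_smul, norm_pow, norm_norm, ← M.norm_sq_eq, mul_pow]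
  exact (pow_le_pow_iff_left₀ (norm_nonneg _) (by positivity) two_ne_zero).mp hsq

lemma continuous_inner : Continuous fun p : X × X => M.inner p.1 p.2 := by
  let := M.normedSpace
  let innerSL : X →L⋆[ℂ] X →L[ℂ] B :=
    M.innerₛₗ.flip.mkContinuous₂ 1 fun y x => by
      simpa [mul_comm ‖y‖] using M.norm_inner_le x y
  exact (innerSL.continuous.comp continuous_snd).clm_apply continuous_fst

theorem exists_inner_preserving_extension {ι : Type*} {f f' : ι → X}
    (hf : Dense (Submodule.span ℂ (Set.range f) : Set X))
    (hff' : ∀ i j, M.inner (f' i) (f' j) = M.inner (f i) (f j)) :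
    ∃ W : X →L[ℂ] X, (∀ i, W (f i) = f' i) ∧ ∀ x y, M.inner (W x) (W y) = M.inner x y := by
  let := M.normedSpace
  set T := Finsupp.linearCombination ℂ f
  set T' := Finsupp.linearCombination ℂ f'
  have hdense : DenseRange T := by
    rwa [DenseRange, ← LinearMap.coe_range, Finsupp.range_linearCombination]
  have hbound : ∃ C, ∀ u, ‖T' u‖ ≤ C * ‖T u‖ :=
    ⟨1, fun u => by rw [one_mul, M.norm_eq, M.norm_eq, M.inner_linearCombination_eq hff']⟩
  set W := T'.extendOfNorm T
  have hW : ∀ u, W (T u) = T' u := LinearMap.extendOfNorm_eq hdense hbound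
  refine ⟨W, fun i => by simpa [T, T'] using hW (Finsupp.single i 1), ?_⟩
  refine hdense.induction_on₂ (isClosed_eq ?_ M.continuous_inner) fun u v => ?_
  · exact M.continuous_inner.comp (W.continuous.prodMap W.continuous)
  · rw [hW, hW, M.inner_linearCombination_eq hff']

end HilbertModuleStruct

namespace IsPaschkeDilation

variable {A : Type} [Ring A] [StarRing A] [Algebra ℂ A] {B : Type} [CStarAlgebra B]
  {X : Type} [NormedAddCommGroup X] [Module ℂ X] [CompleteSpace X]
  {M : HilbertModuleStruct B X} {φ : A → B} {σ : A → X → X} {e : X}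
  (h : IsPaschkeDilation M φ σ e)
include h

lemma inner_generators (a a' : A) (b b' : B) :
    M.inner (σ a (M.smulR e b)) (σ a' (M.smulR e b')) = star b' * φ (star a' * a) * b := by
  obtain ⟨-, -, -, hsmulR, -, -, hmul, -, hadj, hφ, -⟩ := h
  have hadj' : ∀ x y, M.inner x (σ a' y) = M.inner (σ (star a') x) y := fun x y => by
    simpa using (hadj (star a') x y).symm
  rw [hsmulR, hsmulR, M.inner_smulR_right, M.inner_smulR_left, hadj', ← hmul, ← hφ, mul_assoc]

lemma dense_span_range_generators :
    Dense (Submodule.span ℂ (Set.range fun p : A × B => σ p.1 (M.smulR e p.2)) : Set X) := by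
  obtain ⟨-, -, -, -, -, -, -, -, -, -, hdense⟩ := h
  simpa only [Set.range, Prod.exists] using hdense

lemma ext_generators {F₁ F₂ : X →L[ℂ] X}
    (hF : ∀ a b, F₁ (σ a (M.smulR e b)) = F₂ (σ a (M.smulR e b))) : F₁ = F₂ :=
  ContinuousLinearMap.ext_on h.dense_span_range_generators <| by
    rintro _ ⟨⟨a, b⟩, rfl⟩
    exact hF a b

def toCLM (a : A) : X →L[ℂ] X where
  toFun := σ a
  map_add' := h.2.1 a
  map_smul' := h.2.2.1 a
  cont := h.1 a

@[simp] lemma toCLM_apply (a : A) (x : X) : h.toCLM a x = σ a x := rfl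

theorem exists_inner_preserving_of_invariant [PartialOrder B] [StarOrderedRing B]
    (α : A ≃⋆ₐ[ℂ] A) (hα : ∀ a, φ (α a) = φ a) :
    ∃ W : X →L[ℂ] X, (∀ a b, W (σ a (M.smulR e b)) = σ (α a) (M.smulR e b)) ∧
      ∀ x y, M.inner (W x) (W y) = M.inner x y := by
  obtain ⟨W, hW, hW_inner⟩ := M.exists_inner_preserving_extension
    (f' := fun p : A × B => σ (α p.1) (M.smulR e p.2)) h.dense_span_range_generators
    fun p q => by simp only [h.inner_generators, ← map_star, ← map_mul, hα]
  exact ⟨W, fun a b => hW (a, b), hW_inner⟩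

variable {W : X →L[ℂ] X} {α : A ≃⋆ₐ[ℂ] A}
  (hW : ∀ a b, W (σ a (M.smulR e b)) = σ (α a) (M.smulR e b))
include hW

lemma map_cyclic_of_map_generators : W e = e := by
  obtain ⟨-, -, -, -, -, -, -, hone, -⟩ := h
  simpa only [map_one, M.smulR_one, hone] using hW 1 1

lemma map_apply_of_map_generators (a : A) (x : X) : W (σ a x) = σ (α a) (W x) := by
  have hmul : ∀ a₁ a₂ x, σ (a₁ * a₂) x = σ a₁ (σ a₂ x) := h.2.2.2.2.2.2.1
  suffices W.comp (h.toCLM a) = (h.toCLM (α a)).comp W from congr($this x)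
  refine h.ext_generators fun a' b => ?_
  simp only [ContinuousLinearMap.comp_apply, toCLM_apply, ← hmul, hW, map_mul]

end IsPaschkeDilation

theorem exists_module_rep_of_G_invariant_paschke_general
    (A : Type) [CStarAlgebra A]
    (H : Type) [NormedAddCommGroup H] [InnerProductSpace ℂ H] [CompleteSpace H]
    (G : Type) [Group G] (τ : G → A ≃⋆ₐ[ℂ] A)
    (hτ : ∀ (g₁ g₂ : G) (a : A), τ (g₁ * g₂) a = τ g₁ (τ g₂ a))
    (φ : A → (H →L[ℂ] H))
    (hφinv : ∀ (g : G) (a : A), φ (τ g a) = φ a)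
    (X : Type) [NormedAddCommGroup X] [Module ℂ X] [CompleteSpace X]
    (M : HilbertModuleStruct (H →L[ℂ] H) X) (σ : A → X → X) (e : X)
    (h : IsPaschkeDilation M φ σ e) :
    ∃ W : G → X → X,
      (∀ g : G, Function.Bijective (W g)) ∧
      (∀ (g : G) (x y : X), W g (x + y) = W g x + W g y) ∧
      (∀ (g : G) (c : ℂ) (x : X), W g (c • x) = c • W g x) ∧
      (∀ (g : G) (x : X) (b : H →L[ℂ] H), W g (M.smulR x b) = M.smulR (W g x) b) ∧
      (∀ (g : G) (x y : X), M.inner (W g x) (W g y) = M.inner x y) ∧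
      (∀ (g₁ g₂ : G) (x : X), W (g₁ * g₂) x = W g₁ (W g₂ x)) ∧
      (∀ g : G, W g e = e) ∧
      (∀ (g : G) (a : A) (x : X), W g (σ a x) = σ (τ g a) (W g x)) := by
  choose W hW_gen hW_inner using fun g => h.exists_inner_preserving_of_invariant (τ g) (hφinv g)
  have hτ_one : ∀ a, τ 1 a = a := fun a => EquivLike.injective (τ 1) (by rw [← hτ, one_mul])
  have hW_mul : ∀ g₁ g₂, W (g₁ * g₂) = (W g₁).comp (W g₂) := fun g₁ g₂ =>
    h.ext_generators fun a b => by rw [ContinuousLinearMap.comp_apply, hW_gen, hW_gen, hW_gen, hτ]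
  have hW_one : W 1 = ContinuousLinearMap.id ℂ X :=
    h.ext_generators fun a b => by rw [hW_gen, hτ_one, ContinuousLinearMap.id_apply]
  have hW_inv : ∀ g x, W g⁻¹ (W g x) = x := fun g x => by
    rw [← ContinuousLinearMap.comp_apply, ← hW_mul, inv_mul_cancel, hW_one,
      ContinuousLinearMap.id_apply]
  have hW_bij : ∀ g, Function.Bijective (W g) := fun g =>
    ⟨Function.LeftInverse.injective (hW_inv g), fun x => ⟨W g⁻¹ x, by simpa using hW_inv g⁻¹ x⟩⟩
  exact ⟨fun g => W g, hW_bij, fun g => map_add (W g), fun g => map_smul (W g),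
    fun g => M.map_smulR_of_surjective (hW_bij g).2 (hW_inner g), hW_inner,
    fun g₁ g₂ x => congr($(hW_mul g₁ g₂) x), fun g => h.map_cyclic_of_map_generators (hW_gen g),
    fun g => h.map_apply_of_map_generators (hW_gen g)⟩

theorem exists_module_rep_of_G_invariant_paschke
    (A : Type) [CStarAlgebra A] [TopologicalSpace.SeparableSpace A]
    (H : Type) [NormedAddCommGroup H] [InnerProductSpace ℂ H] [CompleteSpace H]
    [TopologicalSpace.SeparableSpace H]
    (G : Type) [Group G] (τ : G → A ≃⋆ₐ[ℂ] A)
    (hτ : ∀ (g₁ g₂ : G) (a : A), τ (g₁ * g₂) a = τ g₁ (τ g₂ a))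
    (φ : A → (H →L[ℂ] H)) (hφ : IsUCPMap A H φ)
    (hφinv : ∀ (g : G) (a : A), φ (τ g a) = φ a)
    (X : Type) [NormedAddCommGroup X] [Module ℂ X] [CompleteSpace X]
    (M : HilbertModuleStruct (H →L[ℂ] H) X) (σ : A → X → X) (e : X)
    (h : IsPaschkeDilation M φ σ e) :
    ∃ W : G → X → X,
      (∀ g : G, Function.Bijective (W g)) ∧
      (∀ (g : G) (x y : X), W g (x + y) = W g x + W g y) ∧
      (∀ (g : G) (c : ℂ) (x : X), W g (c • x) = c • W g x) ∧
      (∀ (g : G) (x : X) (b : H →L[ℂ] H), W g (M.smulR x b) = M.smulR (W g x) b) ∧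
      (∀ (g : G) (x y : X), M.inner (W g x) (W g y) = M.inner x y) ∧
      (∀ (g₁ g₂ : G) (x : X), W (g₁ * g₂) x = W g₁ (W g₂ x)) ∧
      (∀ g : G, W g e = e) ∧
      (∀ (g : G) (a : A) (x : X), W g (σ a x) = σ (τ g a) (W g x)) :=
  exists_module_rep_of_G_invariant_paschke_general A H G τ hτ φ hφinv X M σ e h
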